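/- If (x₁, x₂, x₃, x₄) lies in the closure of 𝔽 in ℂ⁴ and r ∈ (0, 1), then (rx₁, rx₂, r²x₃, rx₄) ∈ 𝔽. -/

import Mathlib

/-! The map `A ↦ (a₁₁, a₂₂, det A, a₁₂ + a₂₁)` is continuous and the closed unit ball of `M₂(ℂ)` is
compact, so the closure of `𝔽` is the image of the closed ball. Scaling a contraction `A` by `r < 1`
gives a strict contraction `r • A`, whose image is `(r a₁₁, r a₂₂, r² det A, r (a₁₂ + a₂₁))`. -/

/-- The operator norm of a 2×2 complex matrix, acting on the Euclidean space ℂ². -/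
noncomputable def opNorm (A : Matrix (Fin 2) (Fin 2) ℂ) : ℝ :=
  ‖LinearMap.toContinuousLinearMap (Matrix.toEuclideanLin A)‖

/-- The domain 𝔽 = {(a₁₁, a₂₂, det A, a₁₂ + a₂₁) : A ∈ M₂(ℂ), ‖A‖ < 1}. -/
noncomputable def domF : Set (ℂ × ℂ × ℂ × ℂ) :=
  {w | ∃ A : Matrix (Fin 2) (Fin 2) ℂ, opNorm A < 1 ∧
    w = (A 0 0, A 1 1, A.det, A 0 1 + A 1 0)}

open Metric

open scoped Matrix.Norms.L2Operator

theorem closure_image_ball_subset_image_closedBall {α β : Type*} [PseudoMetricSpace α]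
    [ProperSpace α] [TopologicalSpace β] [T2Space β] {f : α → β} (hf : Continuous f) (x : α)
    (r : ℝ) : closure (f '' ball x r) ⊆ f '' closedBall x r :=
  closure_minimal (Set.image_mono ball_subset_closedBall)
    ((isCompact_closedBall x r).image hf).isClosed

noncomputable def domFParam (A : Matrix (Fin 2) (Fin 2) ℂ) : ℂ × ℂ × ℂ × ℂ :=
  (A 0 0, A 1 1, A.det, A 0 1 + A 1 0)

theorem continuous_domFParam : Continuous domFParam := by
  unfold domFParam
  fun_prop

theorem domFParam_smul (c : ℂ) (A : Matrix (Fin 2) (Fin 2) ℂ) :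
    domFParam (c • A) = (c * A 0 0, c * A 1 1, c ^ 2 * A.det, c * (A 0 1 + A 1 0)) := by
  simp [domFParam, mul_add]

theorem opNorm_eq_norm (A : Matrix (Fin 2) (Fin 2) ℂ) : opNorm A = ‖A‖ := rfl

theorem domF_eq_image_ball : domF = domFParam '' ball 0 1 := by
  ext w
  simp [domF, domFParam, opNorm_eq_norm, eq_comm]

/-- Lemma 2.5: if (x₁, x₂, x₃, x₄) ∈ closure 𝔽 and r ∈ (0,1), then (rx₁, rx₂, r²x₃, rx₄) ∈ 𝔽. -/
theorem stmt4 (x1 x2 x3 x4 : ℂ) (h : (x1, x2, x3, x4) ∈ closure domF)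
    (r : ℝ) (hr0 : 0 < r) (hr1 : r < 1) :
    ((r : ℂ) * x1, (r : ℂ) * x2, (r : ℂ) ^ 2 * x3, (r : ℂ) * x4) ∈ domF := by
  rw [domF_eq_image_ball] at h ⊢
  obtain ⟨A, hA, hAx⟩ :=
    closure_image_ball_subset_image_closedBall continuous_domFParam 0 1 h
  have hrA : ‖(r : ℂ) • A‖ < 1 := by
    rw [norm_smul, Complex.norm_real, Real.norm_of_nonneg hr0.le]
    nlinarith [mem_closedBall_zero_iff.mp hA]
  refine ⟨(r : ℂ) • A, mem_ball_zero_iff.mpr hrA, ?_⟩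
  simp only [domFParam, Prod.mk.injEq] at hAx
  obtain ⟨rfl, rfl, rfl, rfl⟩ := hAx
  exact domFParam_smul _ A
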